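/- arXiv:1606.05290 — 6 statements merged into one kernel-verified Lean document; each statement's English description precedes it below -/
import Mathlib

section
/- Let (Y, ρ) be a metric space, ψ : ℝ≥0 → ℝ≥0 nondecreasing with ∑_{n=1}^∞ ψⁿ(c) convergent for every c > 0, and let (y_n) be a sequence in Y satisfying ρ(y_{n+1}, y_{n+2}) ≤ ψ(ρ(y_n, y_{n+1})) for all n. Then (y_n) is a Cauchy sequence. -/
set_option maxHeartbeats 800000


theorem stmt_2 {Y : Type*} [MetricSpace Y] (ψ : NNReal → NNReal) (hmono : Monotone ψ)
    (hsum : ∀ c : NNReal, 0 < c → Summable (fun n : ℕ => ψ^[n + 1] c))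
    (y : ℕ → Y)
    (hcontr : ∀ n : ℕ, nndist (y (n + 1)) (y (n + 2)) ≤ ψ (nndist (y n) (y (n + 1)))) :
    CauchySeq y := by
  set c : NNReal := max (nndist (y 0) (y 1)) 1 with hc
  have hcpos : 0 < c := lt_of_lt_of_le one_pos (le_max_right _ _)
  have hbound : ∀ n, nndist (y n) (y (n + 1)) ≤ ψ^[n] c := by
    intro n
    induction n with
    | zero => exact le_max_left _ _
    | succ k ih =>
      calc nndist (y (k + 1)) (y (k + 2)) ≤ ψ (nndist (y k) (y (k + 1))) := hcontr k
        _ ≤ ψ (ψ^[k] c) := hmono ih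
        _ = ψ^[k + 1] c := (Function.iterate_succ_apply' ψ k c).symm
  have hsum' : Summable (fun n : ℕ => ψ^[n] c) := by
    have := (hsum c hcpos)
    exact (NNReal.summable_nat_add_iff 1).mp this
  apply cauchySeq_of_dist_le_of_summable (fun n => (ψ^[n] c : ℝ))
  · intro n
    rw [dist_nndist]
    exact_mod_cast hbound n
  · exact NNReal.summable_coe.mpr hsum'
end

section
/- Let (Y, ρ) be a metric space, ψ : ℝ≥0 → ℝ≥0 nondecreasing with ψ(t) < t for all t > 0, and S, T : Y → Y. Suppose for all A, B ∈ Y: ρ(S A, S B) ≤ ψ(max{ρ(T A, T B), ρ(S A, T A), ρ(S B, T B), (ρ(S A, T B) + ρ(S B, T A))/2}). If U, V are coincidence points of S and T (i.e., S U = T U and S V = T V), then ρ(S U, S V) = 0. -/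
theorem stmt_7 {Y : Type*} [MetricSpace Y] (ψ : NNReal → NNReal) (hmono : Monotone ψ)
    (hψ : ∀ t : NNReal, 0 < t → ψ t < t) (S T : Y → Y)
    (hcontr : ∀ A B : Y, nndist (S A) (S B) ≤
      ψ (max (max (nndist (T A) (T B)) (nndist (S A) (T A)))
          (max (nndist (S B) (T B)) ((nndist (S A) (T B) + nndist (S B) (T A)) / 2))))
    (U V : Y) (hU : S U = T U) (hV : S V = T V) :
    nndist (S U) (S V) = 0 := by
  by_contra h
  have hd : 0 < nndist (S U) (S V) := pos_iff_ne_zero.mpr h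
  have := hcontr U V
  rw [← hU, ← hV] at this
  simp only [nndist_self, nndist_comm (S V) (S U)] at this
  have hmax : (max (max (nndist (S U) (S V)) 0)
      (max 0 ((nndist (S U) (S V) + nndist (S U) (S V)) / 2))) = nndist (S U) (S V) := by
    have : (nndist (S U) (S V) + nndist (S U) (S V)) / 2 = nndist (S U) (S V) := by
      rw [← two_mul]; exact mul_div_cancel_left₀ _ two_ne_zero
    simp [this]
  rw [hmax] at this
  exact absurd this (not_le.mpr (hψ _ hd))
end

section
/- Let (Y, ρ) be a metric space, ψ : ℝ≥0 → ℝ≥0 nondecreasing with ψ(t) < t for all t > 0, and S, T : Y → Y satisfying the contraction ρ(S A, S B) ≤ ψ(max{ρ(T A, T B), ρ(S A, T A), ρ(S B, T B), (ρ(S A, T B) + ρ(S B, T A))/2}) for all A, B, and suppose S and T commute (S ∘ T = T ∘ S). If U is a coincidence point of S and T (S U = T U), then W := S U satisfies S W = W = T W, i.e., W is a common fixed point of S and T. -/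
theorem stmt_9 {Y : Type*} [MetricSpace Y] (ψ : NNReal → NNReal) (hmono : Monotone ψ)
    (hψ : ∀ t : NNReal, 0 < t → ψ t < t) (S T : Y → Y)
    (hcontr : ∀ A B : Y, nndist (S A) (S B) ≤
      ψ (max (max (nndist (T A) (T B)) (nndist (S A) (T A)))
          (max (nndist (S B) (T B)) ((nndist (S A) (T B) + nndist (S B) (T A)) / 2))))
    (hcomm : ∀ y : Y, S (T y) = T (S y))
    (U : Y) (hU : S U = T U) :
    S (S U) = S U ∧ T (S U) = S U := by
  have hTW : T (S U) = S (S U) := by rw [hU, hcomm U, hU]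
  have hSW : S (S U) = S U := by
    by_contra hne
    have hdpos : 0 < nndist (S U) (S (S U)) := by
      rw [pos_iff_ne_zero]
      intro h0
      exact hne ((nndist_eq_zero.mp h0).symm)
    have h := hcontr U (S U)
    rw [← hU, hTW] at h
    have hmax : (max (max (nndist (S U) (S (S U))) (nndist (S U) (S U)))
        (max (nndist (S (S U)) (S (S U)))
          ((nndist (S U) (S (S U)) + nndist (S (S U)) (S U)) / 2))) = nndist (S U) (S (S U)) := by
      rw [nndist_self, nndist_self, nndist_comm (S (S U)) (S U)]
      have h2 : (nndist (S U) (S (S U)) + nndist (S U) (S (S U))) / 2 = nndist (S U) (S (S U)) := by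
        rw [← two_mul, mul_comm, mul_div_assoc]
        simp
      rw [h2]
      simp
    rw [hmax] at h
    exact absurd (lt_of_le_of_lt h (hψ _ hdpos)) (lt_irrefl _)
  exact ⟨hSW, hTW.trans hSW⟩
end

section
/- Let (Y, ρ) be a metric space, ψ : ℝ≥0 → ℝ≥0 nondecreasing with ψ(t) < t for all t > 0, and let α, β, γ, δ₁, δ₂ ≥ 0 with α + β + γ + δ₁ + δ₂ ≤ 1. Suppose S, T : Y → Y satisfy for all A, B ∈ Y: ρ(S A, S B) ≤ ψ(α ρ(T A, T B) + β ρ(S A, T A) + γ ρ(S B, T B) + δ₁ ρ(S A, T B) + δ₂ ρ(S B, T A)). If U, V are coincidence points of S and T, then S U = S V. -/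
theorem stmt_12 {Y : Type*} [MetricSpace Y] (ψ : NNReal → NNReal) (hmono : Monotone ψ)
    (hψ : ∀ t : NNReal, 0 < t → ψ t < t)
    (α β γ δ₁ δ₂ : NNReal) (hsum : α + β + γ + δ₁ + δ₂ ≤ 1)
    (S T : Y → Y)
    (hcontr : ∀ A B : Y, nndist (S A) (S B) ≤
      ψ (α * nndist (T A) (T B) + β * nndist (S A) (T A) + γ * nndist (S B) (T B)
        + δ₁ * nndist (S A) (T B) + δ₂ * nndist (S B) (T A)))
    (U V : Y) (hU : S U = T U) (hV : S V = T V) :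
    S U = S V := by
  by_contra hne
  set d : NNReal := nndist (S U) (S V) with hd
  have hdpos : 0 < d := by
    exact pos_iff_ne_zero.mpr fun h => hne (by rwa [hd, nndist_eq_zero] at h)
  have h1 := hcontr U V
  rw [← hU, ← hV] at h1
  simp only [nndist_self, mul_zero, add_zero, nndist_comm (S V) (S U)] at h1
  have harg : α * d + δ₁ * d + δ₂ * d ≤ d := by
    have : (α + δ₁ + δ₂) * d ≤ 1 * d := by
      apply mul_le_mul_left
      calc α + δ₁ + δ₂ ≤ α + β + γ + δ₁ + δ₂ := by
            have : α + δ₁ + δ₂ ≤ α + β + γ + δ₁ + δ₂ := by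
              gcongr <;> simp [le_add_right, add_assoc]
            exact this
        _ ≤ 1 := hsum
    calc α * d + δ₁ * d + δ₂ * d = (α + δ₁ + δ₂) * d := by ring
      _ ≤ 1 * d := this
      _ = d := one_mul d
  have : d < d := lt_of_le_of_lt (h1.trans (hmono harg)) (hψ d hdpos)
  exact lt_irrefl d this
end

section
/- The function ψ : ℝ≥0 → ℝ≥0 defined by ψ(t) = t²/2 for 0 ≤ t < 1/2 and ψ(t) = t/(t+1) for t ≥ 1/2 is nondecreasing, satisfies ψ(t) < t for all t > 0, and for every t > 0 the series ∑_{n=1}^∞ ψⁿ(t) converges. -/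
theorem stmt_17 (ψ : NNReal → NNReal)
    (hdef : ∀ t : NNReal, ψ t = if t < 1 / 2 then t ^ 2 / 2 else t / (t + 1)) :
    Monotone ψ ∧ (∀ t : NNReal, 0 < t → ψ t < t) ∧
      (∀ t : NNReal, 0 < t → Summable (fun n : ℕ => ψ^[n + 1] t)) := by
  have key : ∀ t : NNReal, ψ t ≤ 2 / 3 * t := by
    intro t
    rw [hdef]
    split_ifs with h
    · rw [← NNReal.coe_le_coe]
      push_cast
      have ht : (t : ℝ) < 1 / 2 := by exact_mod_cast h
      have ht0 : (0 : ℝ) ≤ t := t.coe_nonneg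
      nlinarith
    · rw [← NNReal.coe_le_coe]
      push_cast
      have ht : (1 : ℝ) / 2 ≤ t := by
        have := not_lt.mp h
        exact_mod_cast this
      have hpos : (0 : ℝ) < t + 1 := by linarith
      rw [div_le_iff₀ hpos]
      nlinarith
  refine ⟨?_, ?_, ?_⟩
  · intro a b hab
    rw [hdef, hdef]
    have hab' : (a : ℝ) ≤ b := hab
    have ha0 : (0 : ℝ) ≤ a := a.coe_nonneg
    split_ifs with h1 h2 h2
    · rw [← NNReal.coe_le_coe]
      push_cast
      nlinarith
    · -- a < 1/2 ≤ b : a^2/2 ≤ 1/8 ≤ 1/3 ≤ b/(b+1)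
      rw [← NNReal.coe_le_coe]
      push_cast
      have ha : (a : ℝ) < 1 / 2 := by exact_mod_cast h1
      have hb : (1 : ℝ) / 2 ≤ b := by exact_mod_cast not_lt.mp h2
      have hbpos : (0 : ℝ) < b + 1 := by linarith
      rw [le_div_iff₀ hbpos]
      nlinarith [mul_le_mul_of_nonneg_right (show (a:ℝ)^2 ≤ 1/4 by nlinarith) (le_of_lt hbpos)]
    · exact absurd (lt_of_le_of_lt hab h2) h1
    · rw [← NNReal.coe_le_coe]
      push_cast
      have ha : (1 : ℝ) / 2 ≤ a := by exact_mod_cast not_lt.mp h1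
      have hapos : (0 : ℝ) < a + 1 := by linarith
      have hbpos : (0 : ℝ) < b + 1 := by linarith
      rw [div_le_div_iff₀ hapos hbpos]
      nlinarith
  · intro t ht
    calc ψ t ≤ 2 / 3 * t := key t
      _ < 1 * t := by
        exact mul_lt_mul_of_pos_right (by rw [← NNReal.coe_lt_coe]; push_cast; norm_num) ht
      _ = t := one_mul t
  · intro t ht
    have bound : ∀ n : ℕ, ψ^[n + 1] t ≤ (2 / 3 : NNReal) ^ (n + 1) * t := by
      intro n
      induction n with
      | zero => simpa using key t
      | succ k ih =>
        rw [Function.iterate_succ_apply']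
        calc ψ (ψ^[k + 1] t) ≤ 2 / 3 * ψ^[k + 1] t := key _
          _ ≤ 2 / 3 * ((2 / 3 : NNReal) ^ (k + 1) * t) := by
              exact mul_le_mul_right ih _
          _ = (2 / 3 : NNReal) ^ (k + 1 + 1) * t := by ring
    have hgeo : Summable (fun n : ℕ => (2 / 3 : NNReal) ^ (n + 1) * t) := by
      have h1 : Summable (fun n : ℕ => (2 / 3 : NNReal) ^ n) :=
        NNReal.summable_geometric (by rw [← NNReal.coe_lt_coe]; push_cast; norm_num)
      have h2 := h1.mul_right ((2 / 3 : NNReal) * t)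
      refine h2.congr fun n => ?_
      ring
    exact NNReal.summable_of_le bound hgeo
end

section
/- Let (X, d) be a metric space and let S, T : CB(X) → CB(X) where CB(X) carries the Pompeiu–Hausdorff metric H. Suppose ψ : ℝ≥0 → ℝ≥0 is nondecreasing with ψ(t) < t for t > 0, S and T commute, and for all A, B ∈ CB(X): H(S A, S B) ≤ ψ(max{H(T A, T B), H(S A, T A), H(S B, T B), (H(S A, T B) + H(S B, T A))/2}). If U ∈ CB(X) is a coincidence point (S U = T U), then the set W = S U is a common fixed point: S W = W = T W. -/
theorem stmt_18 {X : Type*} [MetricSpace X]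
    (S T : {s : Set X // s.Nonempty ∧ IsClosed s ∧ Bornology.IsBounded s} →
           {s : Set X // s.Nonempty ∧ IsClosed s ∧ Bornology.IsBounded s})
    (ψ : NNReal → NNReal) (hmono : Monotone ψ) (hψ : ∀ t : NNReal, 0 < t → ψ t < t)
    (hcomm : ∀ A, S (T A) = T (S A))
    (hcontr : ∀ A B,
      (Metric.hausdorffDist (S A).1 (S B).1).toNNReal ≤
        ψ (max (max (Metric.hausdorffDist (T A).1 (T B).1).toNNReal
                    (Metric.hausdorffDist (S A).1 (T A).1).toNNReal)
               (max (Metric.hausdorffDist (S B).1 (T B).1).toNNReal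
                    (((Metric.hausdorffDist (S A).1 (T B).1).toNNReal
                      + (Metric.hausdorffDist (S B).1 (T A).1).toNNReal) / 2))))
    (U : {s : Set X // s.Nonempty ∧ IsClosed s ∧ Bornology.IsBounded s})
    (hU : S U = T U) :
    S (S U) = S U ∧ T (S U) = S U := by
  have hTW : T (S U) = S (S U) := by
    rw [← hcomm U]; exact congrArg S hU.symm
  -- contraction applied to A = U, B = S U
  have h := hcontr U (S U)
  rw [hTW, ← hU] at h
  set r : NNReal := (Metric.hausdorffDist (S U).1 (S (S U)).1).toNNReal with hr
  have hsymm : (Metric.hausdorffDist (S (S U)).1 (S U).1).toNNReal = r := by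
    rw [hr, Metric.hausdorffDist_comm]
  have hself : ∀ (s : Set X), (Metric.hausdorffDist s s).toNNReal = 0 := by
    intro s; simp [Metric.hausdorffDist_self_zero]
  rw [hself, hself, hsymm] at h
  have hmax : max (max r 0) (max 0 ((r + r) / 2)) = r := by
    have : (r + r) / 2 = r := by
      rw [← two_mul]
      exact mul_div_cancel_left₀ r two_ne_zero
    simp [this]
  rw [hmax] at h
  have hr0 : r = 0 := by
    by_contra hne
    exact absurd h (not_le.mpr (hψ r (pos_iff_ne_zero.mpr hne)))
  have hd0 : Metric.hausdorffDist (S U).1 (S (S U)).1 = 0 := by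
    have hnn := Metric.hausdorffDist_nonneg (s := (S U).1) (t := (S (S U)).1)
    have := Real.toNNReal_eq_zero.mp hr0
    linarith
  have heq : S (S U) = S U := by
    apply Subtype.ext
    refine (((S (S U)).2.2.1).hausdorffDist_zero_iff_eq ((S U).2.2.1) ?_).mp ?_
    · exact Metric.hausdorffEdist_ne_top_of_nonempty_of_bounded
        ((S (S U)).2.1) ((S U).2.1) ((S (S U)).2.2.2) ((S U).2.2.2)
    · rw [Metric.hausdorffDist_comm]; exact hd0
  exact ⟨heq, hTW.trans heq⟩
end
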